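/- Let 0 < α < 1 and λ ≥ 0 be real numbers. Then the function v(t) = E_α(−λ t^α) = ∑_{k=0}^∞ (−λ t^α)^k / Γ(αk + 1) is an eigenfunction of the Caputo fractional derivative of order α with eigenvalue −λ: for every t > 0, (1/Γ(1 − α)) ∫₀ᵗ (t − s)^{−α} v'(s) ds = −λ E_α(−λ t^α), where v' denotes the (classical) derivative of v on (0, ∞). (This identity underlies the exact solution u(x,t) = x(1−x) E_α(−t^α) of the fractional reaction–diffusion problem.) -/

import Mathlib

/-!
Write `c = -λ`. Termwise, `d/dt (c t^α)^k / Γ(αk+1) = c^k t^(αk-1) / Γ(αk)` because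
`Γ(a+1) = a Γ(a)`, so `v'(t) = c t^(α-1) E_{α,α}(c t^α)`. The Beta integral
`∫₀ᵗ (t-s)^(-α) s^(αk+α-1) ds = Γ(1-α) Γ(αk+α) / Γ(αk+1) · t^(αk)` then turns the `k`-th
term of this series back into `Γ(1-α) · c · (c t^α)^k / Γ(αk+1)`.
Both interchanges (of the sum with the derivative and with the integral) rest on the convergence
of `∑ r^k / Γ(αk+β)` for every `r`, which follows from the ratio test and the bound
`Γ(x) / Γ(x+α) ≤ (x+α)^(1-α) / x` given by the log-convexity of `Γ`.
-/

open Real Filter MeasureTheory Set Topology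

theorem Real.Gamma_div_Gamma_add_le {α x : ℝ} (hα0 : 0 < α) (hα1 : α < 1) (hx : 0 < x) :
    Gamma x / Gamma (x + α) ≤ (x + α) ^ (1 - α) / x := by
  have hxα : 0 < x + α := by linarith
  have hconv := Gamma_mul_add_mul_le_rpow_Gamma_mul_rpow_Gamma hxα (by linarith : 0 < x + α + 1)
    hα0 (by linarith : 0 < 1 - α) (by ring)
  have hΓ : 0 < Gamma (x + α) := Gamma_pos_of_pos hxα
  rw [show α * (x + α) + (1 - α) * (x + α + 1) = x + 1 by ring, Gamma_add_one hx.ne',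
    Gamma_add_one hxα.ne', mul_rpow hxα.le hΓ.le, ← mul_assoc, mul_comm _ ((x + α) ^ (1 - α)),
    mul_assoc, ← rpow_add hΓ, add_sub_cancel, rpow_one] at hconv
  rw [div_le_div_iff₀ hΓ hx]
  linarith

theorem Real.tendsto_Gamma_div_Gamma_add_atTop {α : ℝ} (hα0 : 0 < α) (hα1 : α < 1) :
    Tendsto (fun x => Gamma x / Gamma (x + α)) atTop (𝓝 0) := by
  have hbound : Tendsto (fun x : ℝ => 2 ^ (1 - α) * x ^ (-α)) atTop (𝓝 0) := by
    simpa using (tendsto_rpow_neg_atTop hα0).const_mul (2 ^ (1 - α) : ℝ)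
  refine tendsto_of_tendsto_of_tendsto_of_le_of_le' tendsto_const_nhds hbound ?_ ?_
  · filter_upwards [eventually_gt_atTop 0] with x hx
    exact div_nonneg (Gamma_pos_of_pos hx).le (Gamma_pos_of_pos (by linarith)).le
  · filter_upwards [eventually_ge_atTop α, eventually_gt_atTop 0] with x hxα hx
    calc Gamma x / Gamma (x + α) ≤ (x + α) ^ (1 - α) / x := Gamma_div_Gamma_add_le hα0 hα1 hx
      _ ≤ (2 * x) ^ (1 - α) / x := by gcongr; linarith
      _ = 2 ^ (1 - α) * x ^ (-α) := by
        rw [mul_rpow zero_le_two hx.le, rpow_sub hx, rpow_one, rpow_neg hx.le]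
        field_simp

theorem summable_pow_div_Gamma_mul_add {α β : ℝ} (hα0 : 0 < α) (hα1 : α < 1) (hβ : 0 < β)
    (r : ℝ) : Summable fun k : ℕ => r ^ k / Gamma (α * k + β) := by
  have hlin : Tendsto (fun k : ℕ => α * k + β) atTop atTop :=
    tendsto_atTop_add_const_right _ _ (tendsto_natCast_atTop_atTop.const_mul_atTop hα0)
  have hratio : ∀ᶠ k : ℕ in atTop, |r| * (Gamma (α * k + β) / Gamma (α * k + β + α)) ≤ 1 / 2 := by
    have := ((tendsto_Gamma_div_Gamma_add_atTop hα0 hα1).comp hlin).const_mul |r|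
    rw [mul_zero] at this
    exact (this.eventually_lt_const (by norm_num)).mono fun k hk => hk.le
  refine summable_of_ratio_norm_eventually_le (r := 1 / 2) (by norm_num) ?_
  filter_upwards [hratio] with k hk
  have hΓ : 0 < Gamma (α * k + β) := Gamma_pos_of_pos (by positivity)
  have hΓ' : 0 < Gamma (α * k + β + α) := Gamma_pos_of_pos (by positivity)
  rw [norm_div, norm_div, norm_pow, norm_pow, Real.norm_of_nonneg hΓ.le, Nat.cast_succ,
    show α * (k + 1 : ℝ) + β = α * k + β + α by ring, Real.norm_of_nonneg hΓ'.le, Real.norm_eq_abs]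
  calc |r| ^ (k + 1) / Gamma (α * k + β + α)
      = |r| * (Gamma (α * k + β) / Gamma (α * k + β + α)) * (|r| ^ k / Gamma (α * k + β)) := by
        field_simp; ring
    _ ≤ 1 / 2 * (|r| ^ k / Gamma (α * k + β)) := by gcongr

theorem integral_rpow_mul_sub_rpow {a b t : ℝ} (ha : 0 < a) (hb : 0 < b) (ht : 0 < t) :
    ∫ s in (0 : ℝ)..t, s ^ (a - 1) * (t - s) ^ (b - 1)
      = Gamma a * Gamma b / Gamma (a + b) * t ^ (a + b - 1) := by
  apply Complex.ofReal_injective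
  have hcast : ∫ s in (0 : ℝ)..t, ((s ^ (a - 1) * (t - s) ^ (b - 1) : ℝ) : ℂ)
      = ∫ s in (0 : ℝ)..t, (s : ℂ) ^ ((a : ℂ) - 1) * ((t : ℂ) - s) ^ ((b : ℂ) - 1) := by
    refine intervalIntegral.integral_congr fun s hs => ?_
    rw [uIcc_of_le ht.le] at hs
    simp only [Complex.ofReal_mul, Complex.ofReal_cpow hs.1,
      Complex.ofReal_cpow (sub_nonneg.2 hs.2)]
    push_cast
    ring_nf
  rw [← intervalIntegral.integral_ofReal, hcast, Complex.betaIntegral_scaled _ _ ht,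
    Complex.betaIntegral_eq_Gamma_mul_div _ _ (by simpa) (by simpa)]
  push_cast [Complex.ofReal_cpow ht.le, Complex.Gamma_ofReal]
  rw [← Complex.ofReal_add, Complex.Gamma_ofReal]
  ring

/-- The two-parameter Mittag-Leffler function `E_{α,β}`; the `E_α` of the statement is `E_{α,1}`. -/
noncomputable def mittagLeffler (α β z : ℝ) : ℝ :=
  ∑' k : ℕ, z ^ k / Gamma (α * k + β)

theorem hasDerivAt_mittagLeffler_mul_rpow {α : ℝ} (hα0 : 0 < α) (hα1 : α < 1) (c : ℝ) {x : ℝ}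
    (hx : 0 < x) :
    HasDerivAt (fun t => mittagLeffler α 1 (c * t ^ α))
      (c * x ^ (α - 1) * mittagLeffler α α (c * x ^ α)) x := by
  set g : ℕ → ℝ → ℝ := fun k t => (c * t ^ α) ^ (k + 1) / Gamma (α * (k + 1 : ℕ) + 1)
  set g' : ℕ → ℝ → ℝ := fun k t => c * t ^ (α - 1) * ((c * t ^ α) ^ k / Gamma (α * k + α))
  have hshift : (fun t => mittagLeffler α 1 (c * t ^ α)) = fun t => 1 + ∑' k, g k t := by
    funext t
    rw [mittagLeffler, (summable_pow_div_Gamma_mul_add hα0 hα1 one_pos _).tsum_eq_zero_add]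
    simp [g]
  have hg : ∀ k, ∀ y ∈ Ioo (x / 2) (2 * x), HasDerivAt (g k) (g' k y) y := by
    intro k y hy
    have hy0 : 0 < y := lt_trans (by linarith) hy.1
    have hαk : 0 < α * (k + 1 : ℕ) := by positivity
    refine (((hasDerivAt_rpow_const (p := α) (Or.inl hy0.ne')).const_mul c).pow (k + 1)).div_const
      (Gamma (α * (k + 1 : ℕ) + 1)) |>.congr_deriv ?_
    rw [Gamma_add_one hαk.ne']
    simp only [g', show α * k + α = α * (k + 1 : ℕ) by push_cast; ring, Nat.add_sub_cancel]
    field_simp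
  have hbound : ∀ k, ∀ y ∈ Ioo (x / 2) (2 * x),
      ‖g' k y‖ ≤ |c| * (x / 2) ^ (α - 1) * ((|c| * (2 * x) ^ α) ^ k / Gamma (α * k + α)) := by
    intro k y hy
    have hy0 : 0 < y := lt_trans (by linarith) hy.1
    have hΓ : 0 < Gamma (α * k + α) := Gamma_pos_of_pos (by positivity)
    simp only [g', norm_mul, norm_div, norm_pow, Real.norm_eq_abs, abs_of_pos hΓ,
      abs_of_pos (rpow_pos_of_pos hy0 _)]
    have hleft : y ^ (α - 1) ≤ (x / 2) ^ (α - 1) :=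
      rpow_le_rpow_of_nonpos (by linarith) hy.1.le (by linarith)
    have hright : y ^ α ≤ (2 * x) ^ α := rpow_le_rpow hy0.le hy.2.le hα0.le
    gcongr
  have hderiv := (hasDerivAt_tsum_of_isPreconnected
    ((summable_pow_div_Gamma_mul_add hα0 hα1 hα0 _).mul_left (|c| * (x / 2) ^ (α - 1)))
    isOpen_Ioo isPreconnected_Ioo hg hbound
    (y₀ := x) (by constructor <;> linarith) ?_ (y := x) (by constructor <;> linarith)).const_add 1
  · rw [hshift]
    refine hderiv.congr_deriv ?_
    simp only [g', mittagLeffler]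
    rw [tsum_mul_left]
  · exact (summable_nat_add_iff 1).2 (summable_pow_div_Gamma_mul_add hα0 hα1 one_pos _)

theorem integral_sub_rpow_neg_mul_mittagLeffler {α : ℝ} (hα0 : 0 < α) (hα1 : α < 1) (c : ℝ)
    {t : ℝ} (ht : 0 < t) :
    ∫ s in (0 : ℝ)..t, (t - s) ^ (-α) * (c * s ^ (α - 1) * mittagLeffler α α (c * s ^ α))
      = Gamma (1 - α) * (c * mittagLeffler α 1 (c * t ^ α)) := by
  set F : ℝ → ℕ → ℝ → ℝ := fun c k s =>
    c ^ (k + 1) / Gamma (α * k + α) * (s ^ (α * k + α - 1) * (t - s) ^ (-α))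
  have hbeta : ∀ k : ℕ, ∫ s in (0 : ℝ)..t, s ^ (α * k + α - 1) * (t - s) ^ (-α)
      = Gamma (α * k + α) * Gamma (1 - α) / Gamma (α * k + 1) * (t ^ α) ^ k := by
    intro k
    have h := integral_rpow_mul_sub_rpow (a := α * k + α) (b := 1 - α) (by positivity)
      (by linarith) ht
    rwa [show (1 : ℝ) - α - 1 = -α by ring, show α * k + α + (1 - α) = α * k + 1 by ring,
      show α * k + 1 - 1 = α * k by ring, rpow_mul ht.le, rpow_natCast] at h
  have hint : ∀ c k, Integrable (F c k) (volume.restrict (Ioc 0 t)) := by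
    intro c k
    -- a non-integrable function would have the junk integral `0`, but this one is positive
    have h := (intervalIntegral.intervalIntegrable_of_integral_ne_zero (by
      rw [hbeta k]
      have := Gamma_pos_of_pos (by positivity : 0 < α * k + α)
      have := Gamma_pos_of_pos (by linarith : 0 < 1 - α)
      have := Gamma_pos_of_pos (by positivity : 0 < α * k + 1)
      positivity)).const_mul (c ^ (k + 1) / Gamma (α * k + α))
    exact (intervalIntegrable_iff_integrableOn_Ioc_of_le ht.le).1 h
  have hterm : ∀ c k, ∫ s in Ioc 0 t, F c k s
      = Gamma (1 - α) * (c * ((c * t ^ α) ^ k / Gamma (α * k + 1))) := by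
    intro c k
    have := Gamma_pos_of_pos (by positivity : 0 < α * k + α)
    rw [← intervalIntegral.integral_of_le ht.le, intervalIntegral.integral_const_mul, hbeta k]
    field_simp
    ring
  have hnorm : ∀ k, ∫ s in Ioc 0 t, ‖F c k s‖ = ∫ s in Ioc 0 t, F |c| k s := by
    intro k
    refine setIntegral_congr_fun measurableSet_Ioc fun s hs => ?_
    have := Gamma_pos_of_pos (by positivity : 0 < α * k + α)
    simp only [F, norm_mul, norm_div, norm_pow, Real.norm_eq_abs, abs_of_pos this,
      abs_of_nonneg (rpow_nonneg hs.1.le _), abs_of_nonneg (rpow_nonneg (sub_nonneg.2 hs.2) _)]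
  have hexpand : ∀ s ∈ Ioc 0 t,
      (t - s) ^ (-α) * (c * s ^ (α - 1) * mittagLeffler α α (c * s ^ α)) = ∑' k, F c k s := by
    intro s hs
    rw [mittagLeffler, ← tsum_mul_left, ← tsum_mul_left]
    congr 1 with k
    have hpow : s ^ (α * k + α - 1) = s ^ (α - 1) * (s ^ α) ^ k := by
      rw [← rpow_natCast, ← rpow_mul hs.1.le, ← rpow_add hs.1]
      ring_nf
    simp only [F, hpow, mul_pow]
    ring
  rw [intervalIntegral.integral_of_le ht.le, setIntegral_congr_fun measurableSet_Ioc hexpand,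
    ← integral_tsum_of_summable_integral_norm (hint c) ?_]
  · simp_rw [hterm]
    rw [tsum_mul_left, tsum_mul_left, mittagLeffler]
  · simp_rw [hnorm, hterm]
    exact ((summable_pow_div_Gamma_mul_add hα0 hα1 one_pos _).mul_left _).mul_left _

theorem mittagLeffler_caputo_eigenfunction_general
    (α lam : ℝ) (hα0 : 0 < α) (hα1 : α < 1)
    (v : ℝ → ℝ)
    (hv : v = fun t => ∑' k : ℕ, (-(lam * t ^ α)) ^ k / Real.Gamma (α * k + 1)) :
    ∀ t : ℝ, 0 < t →
      (1 / Real.Gamma (1 - α)) * (∫ s in (0 : ℝ)..t, (t - s) ^ (-α) * deriv v s)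
        = -lam * ∑' k : ℕ, (-(lam * t ^ α)) ^ k / Real.Gamma (α * k + 1) := by
  intro t ht
  have hv' : v = fun t => mittagLeffler α 1 (-lam * t ^ α) := by
    simp only [hv, mittagLeffler, neg_mul]
  have hderiv : ∀ s ∈ uIoc 0 t,
      deriv v s = -lam * s ^ (α - 1) * mittagLeffler α α (-lam * s ^ α) := by
    intro s hs
    rw [hv']
    exact (hasDerivAt_mittagLeffler_mul_rpow hα0 hα1 (-lam) (uIoc_of_le ht.le ▸ hs).1).deriv
  rw [intervalIntegral.integral_congr_ae (ae_of_all _ fun s hs => by rw [hderiv s hs]),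
    integral_sub_rpow_neg_mul_mittagLeffler hα0 hα1 (-lam) ht, mittagLeffler]
  have hΓ : Gamma (1 - α) ≠ 0 := (Gamma_pos_of_pos (by linarith)).ne'
  field_simp

/-- `v(t) = E_α(-λ t^α)` is an eigenfunction of the Caputo fractional derivative
of order `α ∈ (0,1)` with eigenvalue `-λ`. -/
theorem mittagLeffler_caputo_eigenfunction
    (α lam : ℝ) (hα0 : 0 < α) (hα1 : α < 1) (hlam : 0 ≤ lam)
    (v : ℝ → ℝ)
    (hv : v = fun t => ∑' k : ℕ, (-(lam * t ^ α)) ^ k / Real.Gamma (α * k + 1)) :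
    ∀ t : ℝ, 0 < t →
      (1 / Real.Gamma (1 - α)) * (∫ s in (0 : ℝ)..t, (t - s) ^ (-α) * deriv v s)
        = -lam * ∑' k : ℕ, (-(lam * t ^ α)) ^ k / Real.Gamma (α * k + 1) :=
  mittagLeffler_caputo_eigenfunction_general α lam hα0 hα1 v hv
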